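/- arXiv:2507.08465 — 4 statements merged into one kernel-verified Lean document; each statement's English description precedes it below -/
import Mathlib

section
/- Let K ≥ 1 and m ≥ 1, let μ₁, …, μ_K be probability measures on a measurable space S with uniform mixture μ = (1/K)·∑_{r=1}^{K} μ_r, and let ℓ : S → ℝ be measurable with ∫ ℓ² dμ_r < ∞ for each r. Define the SRS variance V_SRS = (1/(Km))·Var_μ(ℓ) (the variance of the mean of Km i.i.d. μ-samples of ℓ) and the RSS variance V_RSS = (1/(K²m))·∑_{r=1}^{K} Var_{μ_r}(ℓ) (the variance of the stratified mean with m independent samples from each μ_r). Then V_RSS = V_SRS + (1/(Km))·[ (∫ ℓ dμ)² − (1/K)·∑_{r=1}^{K} (∫ ℓ dμ_r)² ]. -/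
/-!
The second moment of a uniform mixture is the mean of the component second moments, while
the squared mixture mean `(∫ ℓ dμ)²` occurs on both sides and cancels. Hence, after scaling
by `1 / (K m)`, the identity is the law of total variance for a uniform mixture.
-/

open MeasureTheory
open scoped ENNReal

namespace MeasureTheory

variable {S ι : Type*} [MeasurableSpace S] [Fintype ι]

theorem integral_smul_sum_measure {G : Type*} [NormedAddCommGroup G] [NormedSpace ℝ G]
    {ν : ι → Measure S} {f : S → G} (hf : ∀ i, Integrable f (ν i)) (c : ℝ≥0∞) :
    ∫ s, f s ∂(c • ∑ i, ν i) = c.toReal • ∑ i, ∫ s, f s ∂(ν i) := by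
  rw [integral_smul_measure, integral_finsetSum_measure fun i _ => hf i]

theorem variance_uniform_mixture {ν : ι → Measure S} {μ : Measure S}
    (hμ : μ = (Fintype.card ι : ℝ≥0∞)⁻¹ • ∑ i, ν i) {f : S → ℝ}
    (hsq : ∀ i, Integrable (fun s => f s ^ 2) (ν i)) :
    (∫ s, f s ^ 2 ∂μ) - (∫ s, f s ∂μ) ^ 2
      = (Fintype.card ι : ℝ)⁻¹ * ∑ i, ((∫ s, f s ^ 2 ∂(ν i)) - (∫ s, f s ∂(ν i)) ^ 2)
        + ((Fintype.card ι : ℝ)⁻¹ * ∑ i, (∫ s, f s ∂(ν i)) ^ 2 - (∫ s, f s ∂μ) ^ 2) := by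
  rw [hμ, integral_smul_sum_measure hsq, smul_eq_mul, ENNReal.toReal_inv,
    ENNReal.toReal_natCast, Finset.sum_sub_distrib]
  ring

end MeasureTheory

theorem rss_srs_variance_decomposition_general
    {S : Type*} [MeasurableSpace S]
    (K m : ℕ)
    (μr : Fin K → Measure S)
    (μ : Measure S) (hμ : μ = (K : ℝ≥0∞)⁻¹ • ∑ r, μr r)
    (ℓ : S → ℝ)
    (hsq : ∀ r, Integrable (fun s => ℓ s ^ 2) (μr r)) :
    (1 / ((K : ℝ) ^ 2 * m)) * ∑ r, ((∫ s, ℓ s ^ 2 ∂(μr r)) - (∫ s, ℓ s ∂(μr r)) ^ 2)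
      = (1 / ((K : ℝ) * m)) * ((∫ s, ℓ s ^ 2 ∂μ) - (∫ s, ℓ s ∂μ) ^ 2)
        + (1 / ((K : ℝ) * m)) *
            ((∫ s, ℓ s ∂μ) ^ 2 - (1 / (K : ℝ)) * ∑ r, (∫ s, ℓ s ∂(μr r)) ^ 2) := by
  have htotal := variance_uniform_mixture (by simpa using hμ) hsq
  rw [Fintype.card_fin] at htotal
  rw [htotal]
  ring

/-- Exact relation between the RSS and SRS variances.
With `μ` the uniform mixture of the strata `μr r`, and `Var_ν(ℓ) = ∫ ℓ² dν − (∫ ℓ dν)²`,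
the RSS variance `(1/(K²m)) ∑_r Var_{μr r}(ℓ)` equals the SRS variance
`(1/(Km)) Var_μ(ℓ)` plus `(1/(Km)) [ (∫ ℓ dμ)² − (1/K) ∑_r (∫ ℓ dμr r)² ]`. -/
theorem rss_srs_variance_decomposition
    {S : Type*} [MeasurableSpace S]
    (K m : ℕ) (hK : 1 ≤ K) (hm : 1 ≤ m)
    (μr : Fin K → Measure S) (hprob : ∀ r, IsProbabilityMeasure (μr r))
    (μ : Measure S) (hμ : μ = (K : ℝ≥0∞)⁻¹ • ∑ r, μr r)
    (ℓ : S → ℝ) (hℓ : Measurable ℓ)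
    (hsq : ∀ r, Integrable (fun s => ℓ s ^ 2) (μr r)) :
    (1 / ((K : ℝ) ^ 2 * m)) * ∑ r, ((∫ s, ℓ s ^ 2 ∂(μr r)) - (∫ s, ℓ s ∂(μr r)) ^ 2)
      = (1 / ((K : ℝ) * m)) * ((∫ s, ℓ s ^ 2 ∂μ) - (∫ s, ℓ s ∂μ) ^ 2)
        + (1 / ((K : ℝ) * m)) *
            ((∫ s, ℓ s ∂μ) ^ 2 - (1 / (K : ℝ)) * ∑ r, (∫ s, ℓ s ∂(μr r)) ^ 2) :=
  rss_srs_variance_decomposition_general K m μr μ hμ ℓ hsq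
end

section
/- Let K ≥ 1 and m ≥ 1, let μ₁, …, μ_K be probability measures on a measurable space S with uniform mixture μ = (1/K)·∑_{r=1}^{K} μ_r, and let ℓ : S → ℝ be measurable with ∫ ℓ² dμ_r < ∞ for each r. Then the RSS variance is no larger than the SRS variance: (1/(K²m))·∑_{r=1}^{K} Var_{μ_r}(ℓ) ≤ (1/(Km))·Var_μ(ℓ), where Var_ν(ℓ) = ∫ ℓ² dν − (∫ ℓ dν)². -/
open MeasureTheory
open scoped ENNReal

/-! Writing `A r = ∫ ℓ² dμ_r` and `B r = ∫ ℓ dμ_r`, both moments of the mixture are the averages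
of the stratum moments, so the inequality reduces to `(avg B)² ≤ avg B²`: the mixture variance
is the average within-stratum variance plus the (nonnegative) variance of the stratum means. -/

open Finset in
theorem sum_sub_sq_div_card_le {ι : Type*} (s : Finset ι) (a b : ι → ℝ) :
    (∑ i ∈ s, (a i - b i ^ 2)) / #s ≤ (∑ i ∈ s, a i) / #s - ((∑ i ∈ s, b i) / #s) ^ 2 := by
  rw [sum_sub_distrib, sub_div]
  linarith [sum_div_card_sq_le_sum_sq_div_card (s := s) (f := b)]

namespace MeasureTheory.Measure

variable {S ι : Type*} [MeasurableSpace S] [Fintype ι]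

noncomputable def uniformMixture (ν : ι → Measure S) : Measure S :=
  (Fintype.card ι : ℝ≥0∞)⁻¹ • ∑ i, ν i

theorem integral_uniformMixture (ν : ι → Measure S) {f : S → ℝ}
    (hf : ∀ i, Integrable f (ν i)) :
    ∫ s, f s ∂uniformMixture ν = (∑ i, ∫ s, f s ∂ν i) / Fintype.card ι := by
  rw [uniformMixture, integral_smul_measure, integral_finsetSum_measure fun i _ => hf i,
    ENNReal.toReal_inv, ENNReal.toReal_natCast, smul_eq_mul, inv_mul_eq_div]

theorem sum_variance_div_card_le_variance_uniformMixture (ν : ι → Measure S)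
    [∀ i, IsFiniteMeasure (ν i)] {ℓ : S → ℝ} (hℓ : ∀ i, MemLp ℓ 2 (ν i)) :
    (∑ i, ((∫ s, ℓ s ^ 2 ∂ν i) - (∫ s, ℓ s ∂ν i) ^ 2)) / Fintype.card ι
      ≤ (∫ s, ℓ s ^ 2 ∂uniformMixture ν) - (∫ s, ℓ s ∂uniformMixture ν) ^ 2 := by
  rw [integral_uniformMixture ν fun i => (hℓ i).integrable_sq,
    integral_uniformMixture ν fun i => (hℓ i).integrable one_le_two]
  exact sum_sub_sq_div_card_le _ _ _

end MeasureTheory.Measure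

open MeasureTheory.Measure in
theorem rss_variance_le_srs_variance_general
    {S : Type*} [MeasurableSpace S]
    (K m : ℕ)
    (μr : Fin K → Measure S) (hprob : ∀ r, IsProbabilityMeasure (μr r))
    (μ : Measure S) (hμ : μ = (K : ℝ≥0∞)⁻¹ • ∑ r, μr r)
    (ℓ : S → ℝ) (hℓ : Measurable ℓ)
    (hsq : ∀ r, Integrable (fun s => ℓ s ^ 2) (μr r)) :
    (1 / ((K : ℝ) ^ 2 * m)) * ∑ r, ((∫ s, ℓ s ^ 2 ∂(μr r)) - (∫ s, ℓ s ∂(μr r)) ^ 2)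
      ≤ (1 / ((K : ℝ) * m)) * ((∫ s, ℓ s ^ 2 ∂μ) - (∫ s, ℓ s ∂μ) ^ 2) := by
  obtain rfl : μ = uniformMixture μr := by simpa [uniformMixture] using hμ
  have hmix := sum_variance_div_card_le_variance_uniformMixture μr
    fun r => (memLp_two_iff_integrable_sq hℓ.aestronglyMeasurable).2 (hsq r)
  rw [Fintype.card_fin] at hmix
  calc (1 / ((K : ℝ) ^ 2 * m)) * ∑ r, ((∫ s, ℓ s ^ 2 ∂(μr r)) - (∫ s, ℓ s ∂(μr r)) ^ 2)
      = (1 / ((K : ℝ) * m)) * ((∑ r, ((∫ s, ℓ s ^ 2 ∂(μr r)) - (∫ s, ℓ s ∂(μr r)) ^ 2)) / K) := by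
        ring
    _ ≤ _ := by gcongr

/-- The RSS variance is no larger than the SRS variance.
With `μ` the uniform mixture of the strata `μr r`, and `Var_ν(ℓ) = ∫ ℓ² dν − (∫ ℓ dν)²`,
we have `(1/(K²m)) ∑_r Var_{μr r}(ℓ) ≤ (1/(Km)) Var_μ(ℓ)`. -/
theorem rss_variance_le_srs_variance
    {S : Type*} [MeasurableSpace S]
    (K m : ℕ) (hK : 1 ≤ K) (hm : 1 ≤ m)
    (μr : Fin K → Measure S) (hprob : ∀ r, IsProbabilityMeasure (μr r))
    (μ : Measure S) (hμ : μ = (K : ℝ≥0∞)⁻¹ • ∑ r, μr r)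
    (ℓ : S → ℝ) (hℓ : Measurable ℓ)
    (hsq : ∀ r, Integrable (fun s => ℓ s ^ 2) (μr r)) :
    (1 / ((K : ℝ) ^ 2 * m)) * ∑ r, ((∫ s, ℓ s ^ 2 ∂(μr r)) - (∫ s, ℓ s ∂(μr r)) ^ 2)
      ≤ (1 / ((K : ℝ) * m)) * ((∫ s, ℓ s ^ 2 ∂μ) - (∫ s, ℓ s ∂μ) ^ 2) :=
  rss_variance_le_srs_variance_general K m μr hprob μ hμ ℓ hℓ hsq
end

section
/- Let K ≥ 1 and m ≥ 1, and let ν₁, …, ν_K be probability measures on ℝ, each supported on {−1, 1}, with uniform mixture ν = (1/K)·∑_{r=1}^{K} ν_r. Consider the exponential loss ℓ(z) = exp(z) (corresponding to φ(α) = e^{−α} evaluated at α = y·f(x), z = −y·f(x) ∈ {−1,1}). Then the RSS variance V_RSS = (1/(K²m))·∑_{r=1}^{K} Var_{ν_r}(ℓ) and the SRS variance V_SRS = (1/(Km))·Var_ν(ℓ) satisfy V_RSS = V_SRS + ((e − e^{−1})/2)²·(1/(Km))·[ (∫ z dν(z))² − (1/K)·∑_{r=1}^{K} (∫ z dν_r(z))²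 ]. -/
open MeasureTheory
open scoped ENNReal

noncomputable def Acoef : ℝ := (Real.exp 1 + Real.exp (-1)) / 2
noncomputable def Bcoef : ℝ := (Real.exp 1 - Real.exp (-1)) / 2
noncomputable def A2coef : ℝ := (Real.exp 1 ^ 2 + Real.exp (-1) ^ 2) / 2
noncomputable def B2coef : ℝ := (Real.exp 1 ^ 2 - Real.exp (-1) ^ 2) / 2

lemma int_id_aux (μ : Measure ℝ) [IsProbabilityMeasure μ]
    (h : ∀ᵐ z ∂μ, z = (-1 : ℝ) ∨ z = 1) : Integrable (fun z : ℝ => z) μ := by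
  refine Integrable.mono' (integrable_const 1) measurable_id.aestronglyMeasurable ?_
  filter_upwards [h] with z hz
  rcases hz with hz | hz <;> simp [hz]

lemma int_exp_aux (μ : Measure ℝ) [IsProbabilityMeasure μ]
    (h : ∀ᵐ z ∂μ, z = (-1 : ℝ) ∨ z = 1) : Integrable (fun z : ℝ => Real.exp z) μ := by
  refine Integrable.mono' (integrable_const (Real.exp 1)) (Real.continuous_exp.measurable).aestronglyMeasurable ?_
  filter_upwards [h] with z hz
  have hb : z ≤ 1 := by rcases hz with hz | hz <;> simp [hz]
  rw [Real.norm_of_nonneg (Real.exp_pos _).le]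
  exact Real.exp_le_exp.mpr hb

lemma int_exp2_aux (μ : Measure ℝ) [IsProbabilityMeasure μ]
    (h : ∀ᵐ z ∂μ, z = (-1 : ℝ) ∨ z = 1) : Integrable (fun z : ℝ => Real.exp z ^ 2) μ := by
  refine Integrable.mono' (integrable_const (Real.exp 1 ^ 2)) ((Real.continuous_exp.pow 2).measurable).aestronglyMeasurable ?_
  filter_upwards [h] with z hz
  have hb : z ≤ 1 := by rcases hz with hz | hz <;> simp [hz]
  rw [Real.norm_of_nonneg (by positivity)]
  gcongr
  all_goals try first | exact (Real.exp_pos _).le | exact Real.exp_le_exp.mpr hb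

lemma exp_eq_aux (μ : Measure ℝ) [IsProbabilityMeasure μ]
    (h : ∀ᵐ z ∂μ, z = (-1 : ℝ) ∨ z = 1) :
    ∫ z, Real.exp z ∂μ = Acoef + Bcoef * ∫ z, z ∂μ := by
  have h1 : ∫ z, Real.exp z ∂μ = ∫ z, (Acoef + Bcoef * z) ∂μ := by
    refine integral_congr_ae ?_
    filter_upwards [h] with z hz
    rcases hz with hz | hz <;> simp [hz, Acoef, Bcoef] <;> ring
  rw [h1, integral_add (integrable_const _) ((int_id_aux μ h).const_mul _),
    integral_const, integral_const_mul]
  simp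

lemma exp2_eq_aux (μ : Measure ℝ) [IsProbabilityMeasure μ]
    (h : ∀ᵐ z ∂μ, z = (-1 : ℝ) ∨ z = 1) :
    ∫ z, Real.exp z ^ 2 ∂μ = A2coef + B2coef * ∫ z, z ∂μ := by
  have h1 : ∫ z, Real.exp z ^ 2 ∂μ = ∫ z, (A2coef + B2coef * z) ∂μ := by
    refine integral_congr_ae ?_
    filter_upwards [h] with z hz
    rcases hz with hz | hz <;> simp [hz, A2coef, B2coef] <;> ring
  rw [h1, integral_add (integrable_const _) ((int_id_aux μ h).const_mul _),
    integral_const, integral_const_mul]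
  simp

/-- Exact RSS/SRS variance gap for the exponential loss.
With `νr r` probability measures on `ℝ` supported on `{-1, 1}`, `ν` their uniform
mixture, and `ℓ z = exp z`, the RSS variance `(1/(K²m)) ∑_r Var_{νr r}(ℓ)` equals the
SRS variance `(1/(Km)) Var_ν(ℓ)` plus
`((e − e⁻¹)/2)² (1/(Km)) [ (∫ z dν)² − (1/K) ∑_r (∫ z dνr r)² ]`. -/
theorem rss_srs_variance_gap_exponential_loss
    (K m : ℕ) (hK : 1 ≤ K) (hm : 1 ≤ m)
    (νr : Fin K → Measure ℝ) (hprob : ∀ r, IsProbabilityMeasure (νr r))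
    (hsupp : ∀ r, ∀ᵐ z ∂(νr r), z = (-1 : ℝ) ∨ z = 1)
    (ν : Measure ℝ) (hν : ν = (K : ℝ≥0∞)⁻¹ • ∑ r, νr r) :
    (1 / ((K : ℝ) ^ 2 * m)) *
        ∑ r, ((∫ z, Real.exp z ^ 2 ∂(νr r)) - (∫ z, Real.exp z ∂(νr r)) ^ 2)
      = (1 / ((K : ℝ) * m)) * ((∫ z, Real.exp z ^ 2 ∂ν) - (∫ z, Real.exp z ∂ν) ^ 2)
        + ((Real.exp 1 - Real.exp (-1)) / 2) ^ 2 * (1 / ((K : ℝ) * m)) *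
            ((∫ z, z ∂ν) ^ 2 - (1 / (K : ℝ)) * ∑ r, (∫ z, z ∂(νr r)) ^ 2) := by
  haveI := hprob
  have hK0 : (K : ℝ) ≠ 0 := by
    exact Nat.cast_ne_zero.mpr (by omega)
  have hm0 : (m : ℝ) ≠ 0 := by
    exact Nat.cast_ne_zero.mpr (by omega)
  set T : Fin K → ℝ := fun r => ∫ z, z ∂(νr r) with hT
  -- integrals over ν
  have hνint : ∀ (f : ℝ → ℝ), (∀ r, Integrable f (νr r)) →
      ∫ z, f z ∂ν = (K : ℝ)⁻¹ * ∑ r, ∫ z, f z ∂(νr r) := by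
    intro f hf
    rw [hν, integral_smul_measure, integral_finset_sum_measure (fun r _ => hf r)]
    simp [ENNReal.toReal_inv, smul_eq_mul]
  have hzν : ∫ z, z ∂ν = (K : ℝ)⁻¹ * ∑ r, T r :=
    hνint _ (fun r => int_id_aux _ (hsupp r))
  have heν : ∫ z, Real.exp z ∂ν = Acoef + Bcoef * ((K : ℝ)⁻¹ * ∑ r, T r) := by
    rw [hνint _ (fun r => int_exp_aux _ (hsupp r))]
    have : ∀ r : Fin K, ∫ z, Real.exp z ∂(νr r) = Acoef + Bcoef * T r :=
      fun r => exp_eq_aux _ (hsupp r)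
    simp only [this, Finset.sum_add_distrib, Finset.sum_const, Finset.card_fin,
      ← Finset.mul_sum, nsmul_eq_mul]
    field_simp
  have he2ν : ∫ z, Real.exp z ^ 2 ∂ν = A2coef + B2coef * ((K : ℝ)⁻¹ * ∑ r, T r) := by
    rw [hνint _ (fun r => int_exp2_aux _ (hsupp r))]
    have : ∀ r : Fin K, ∫ z, Real.exp z ^ 2 ∂(νr r) = A2coef + B2coef * T r :=
      fun r => exp2_eq_aux _ (hsupp r)
    simp only [this, Finset.sum_add_distrib, Finset.sum_const, Finset.card_fin,
      ← Finset.mul_sum, nsmul_eq_mul]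
    field_simp
  have hsum : ∑ r, ((∫ z, Real.exp z ^ 2 ∂(νr r)) - (∫ z, Real.exp z ∂(νr r)) ^ 2)
      = (K : ℝ) * (A2coef - Acoef ^ 2) + (B2coef - 2 * Acoef * Bcoef) * (∑ r, T r)
        - Bcoef ^ 2 * ∑ r, (T r) ^ 2 := by
    have h1 : ∀ r : Fin K, ((∫ z, Real.exp z ^ 2 ∂(νr r)) - (∫ z, Real.exp z ∂(νr r)) ^ 2)
        = (A2coef - Acoef ^ 2) + (B2coef - 2 * Acoef * Bcoef) * T r - Bcoef ^ 2 * (T r) ^ 2 := by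
      intro r
      rw [exp_eq_aux _ (hsupp r), exp2_eq_aux _ (hsupp r)]
      ring
    simp only [h1, Finset.sum_sub_distrib, Finset.sum_add_distrib, Finset.sum_const,
      Finset.card_fin, ← Finset.mul_sum, nsmul_eq_mul]
    ring
  have hB2 : B2coef = 2 * Acoef * Bcoef := by
    unfold B2coef Acoef Bcoef; ring
  have hBshow : ((Real.exp 1 - Real.exp (-1)) / 2) = Bcoef := rfl
  rw [hsum, hzν, heν, he2ν, hBshow, hB2]
  field_simp
  ring
end

section
/- Let K ≥ 1 and m ≥ 1, and let ν₁, …, ν_K be probability measures on ℝ, each supported on {−1, 1}, with uniform mixture ν = (1/K)·∑_{r=1}^{K} ν_r. Consider the logistic loss ℓ(z) = log(1 + exp(z)) (corresponding to φ(α) = log(1 + e^{−α}) evaluated at α = y·f(x), z = −y·f(x) ∈ {−1,1}). Then the RSS variance V_RSS = (1/(K²m))·∑_{r=1}^{K} Var_{ν_r}(ℓ) and the SRS variance V_SRS = (1/(Km))·Var_ν(ℓ) satisfy V_RSS = V_SRS + (1/(4Km))·[ (∫ z dν(z))² − (1/K)·∑_{r=1}^{K} (∫ z dν_r(z))² ].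 -/
open MeasureTheory
open scoped ENNReal

noncomputable def cLog : ℝ := Real.log (1 + Real.exp (-1)) + 1/2

lemma log_pm (z : ℝ) (hz : z = -1 ∨ z = 1) :
    Real.log (1 + Real.exp z) = cLog + z/2 := by
  have hb : Real.log (1 + Real.exp 1) = 1 + Real.log (1 + Real.exp (-1)) := by
    have h1 : (1:ℝ) + Real.exp 1 = Real.exp 1 * (1 + Real.exp (-1)) := by
      rw [mul_add, mul_one, ← Real.exp_add]
      norm_num [add_comm]
    rw [h1, Real.log_mul (Real.exp_ne_zero 1) (by positivity), Real.log_exp]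
  rcases hz with h | h <;> simp [h, cLog, hb] <;> ring

lemma sq_log_pm (z : ℝ) (hz : z = -1 ∨ z = 1) :
    Real.log (1 + Real.exp z) ^ 2 = cLog^2 + 1/4 + cLog * z := by
  rw [log_pm z hz]
  rcases hz with h | h <;> rw [h] <;> ring

lemma moments (κ : Measure ℝ) [IsProbabilityMeasure κ]
    (hs : ∀ᵐ z ∂κ, z = (-1:ℝ) ∨ z = 1) :
    (∫ z, Real.log (1 + Real.exp z) ∂κ) = cLog + (∫ z, z ∂κ)/2 ∧
    (∫ z, Real.log (1 + Real.exp z)^2 ∂κ) = cLog^2 + 1/4 + cLog * ∫ z, z ∂κ := by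
  have hint : Integrable (fun z : ℝ => z) κ := by
    refine (integrable_const (1:ℝ)).mono' measurable_id.aestronglyMeasurable ?_
    filter_upwards [hs] with z hz
    rcases hz with h | h <;> simp [h]
  constructor
  · rw [integral_congr_ae (g := fun z => cLog + z/2)
      (by filter_upwards [hs] with z hz; exact log_pm z hz)]
    rw [integral_add (integrable_const _) (hint.div_const 2), integral_const,
      integral_div]
    simp
  · rw [integral_congr_ae (g := fun z => cLog^2 + 1/4 + cLog * z)
      (by filter_upwards [hs] with z hz; exact sq_log_pm z hz)]
    rw [integral_add (integrable_const _) (hint.const_mul cLog), integral_const,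
      integral_const_mul]
    simp

/-- Exact RSS/SRS variance gap for the logistic loss.
With `νr r` probability measures on `ℝ` supported on `{-1, 1}`, `ν` their uniform
mixture, and `ℓ z = log (1 + exp z)`, the RSS variance `(1/(K²m)) ∑_r Var_{νr r}(ℓ)`
equals the SRS variance `(1/(Km)) Var_ν(ℓ)` plus
`(1/(4Km)) [ (∫ z dν)² − (1/K) ∑_r (∫ z dνr r)² ]`. -/
theorem rss_srs_variance_gap_logistic_loss
    (K m : ℕ) (hK : 1 ≤ K) (hm : 1 ≤ m)
    (νr : Fin K → Measure ℝ) (hprob : ∀ r, IsProbabilityMeasure (νr r))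
    (hsupp : ∀ r, ∀ᵐ z ∂(νr r), z = (-1 : ℝ) ∨ z = 1)
    (ν : Measure ℝ) (hν : ν = (K : ℝ≥0∞)⁻¹ • ∑ r, νr r) :
    (1 / ((K : ℝ) ^ 2 * m)) *
        ∑ r, ((∫ z, Real.log (1 + Real.exp z) ^ 2 ∂(νr r))
              - (∫ z, Real.log (1 + Real.exp z) ∂(νr r)) ^ 2)
      = (1 / ((K : ℝ) * m)) * ((∫ z, Real.log (1 + Real.exp z) ^ 2 ∂ν)
              - (∫ z, Real.log (1 + Real.exp z) ∂ν) ^ 2)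
        + (1 / (4 * (K : ℝ) * m)) *
            ((∫ z, z ∂ν) ^ 2 - (1 / (K : ℝ)) * ∑ r, (∫ z, z ∂(νr r)) ^ 2) := by
  have hK0 : (K : ℝ≥0∞) ≠ 0 := by exact_mod_cast Nat.pos_of_ne_zero (by omega) |>.ne'
  have hKtop : (K : ℝ≥0∞) ≠ ⊤ := ENNReal.natCast_ne_top K
  have hνprob : IsProbabilityMeasure ν := by
    constructor
    rw [hν]
    simp only [Measure.smul_apply, Measure.finset_sum_apply, smul_eq_mul]
    rw [Finset.sum_congr rfl (fun r _ => (hprob r).measure_univ)]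
    simp [Finset.card_univ, ENNReal.inv_mul_cancel hK0 hKtop]
  have hνsupp : ∀ᵐ z ∂ν, z = (-1:ℝ) ∨ z = 1 := by
    rw [hν, ae_iff]
    simp only [Measure.smul_apply, Measure.finset_sum_apply, smul_eq_mul]
    have : ∀ r : Fin K, (νr r) {a : ℝ | ¬(a = -1 ∨ a = 1)} = 0 := fun r => by
      simpa [ae_iff] using hsupp r
    rw [Finset.sum_congr rfl fun r _ => this r]
    simp
  have hm1 := fun r => (@moments (νr r) (hprob r) (hsupp r)).1
  have hm2 := fun r => (@moments (νr r) (hprob r) (hsupp r)).2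
  have hn1 := (@moments ν hνprob hνsupp).1
  have hn2 := (@moments ν hνprob hνsupp).2
  rw [hn1, hn2, Finset.sum_congr rfl (fun r _ => by rw [hm1 r, hm2 r])]
  have hKr : (K : ℝ) ≠ 0 := by positivity
  have hmr : (m : ℝ) ≠ 0 := by
    have : 0 < m := hm
    positivity
  have hsum : ∑ r : Fin K, ((cLog^2 + 1/4 + cLog * ∫ z, z ∂(νr r))
      - (cLog + (∫ z, z ∂(νr r))/2) ^ 2)
      = ∑ r : Fin K, (1/4 - (∫ z, z ∂(νr r))^2/4) := by
    refine Finset.sum_congr rfl fun r _ => ?_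
    ring
  rw [hsum, Finset.sum_sub_distrib, Finset.sum_const, Finset.card_univ, Fintype.card_fin]
  have : ∑ r : Fin K, (∫ z, z ∂(νr r))^2/4 = (∑ r : Fin K, (∫ z, z ∂(νr r))^2)/4 := by
    rw [Finset.sum_div]
  rw [this]
  field_simp
  ring
end
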